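/- arXiv:2605.23421 — 3 statements merged into one kernel-verified Lean document; each statement's English description precedes it below -/
import Mathlib

section
/- Let H be a Hilbert space and P, Q orthogonal projections on H. Then ‖P − Q‖ = max{‖P(I − Q)‖, ‖Q(I − P)‖}. -/
open ContinuousLinearMap

local notation "⟪" x ", " y "⟫" => @inner ℂ _ _ x y

section Aux

variable {H : Type*} [NormedAddCommGroup H] [InnerProductSpace ℂ H] [CompleteSpace H]

private lemma sa_inner (P : H →L[ℂ] H) (hP2 : IsSelfAdjoint P) (x y : H) :
    ⟪P x, y⟫ = ⟪x, P y⟫ := by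
  conv_lhs => rw [← hP2.adjoint_eq]
  exact ContinuousLinearMap.adjoint_inner_left P y x

private lemma proj_norm_apply_le (P : H →L[ℂ] H)
    (hP1 : IsIdempotentElem P) (hP2 : IsSelfAdjoint P) (x : H) : ‖P x‖ ≤ ‖x‖ := by
  have h1 : ⟪P x, P x⟫ = ⟪x, P x⟫ := by
    rw [sa_inner P hP2 x (P x)]
    congr 1
    rw [← ContinuousLinearMap.mul_apply, hP1]
  have h2 : (‖P x‖ : ℝ) ^ 2 = RCLike.re ⟪x, P x⟫ := by
    rw [← h1, inner_self_eq_norm_sq]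
  have h3 : RCLike.re ⟪x, P x⟫ ≤ ‖x‖ * ‖P x‖ := by
    calc RCLike.re ⟪x, P x⟫ ≤ ‖⟪x, P x⟫‖ := RCLike.re_le_norm _
    _ ≤ ‖x‖ * ‖P x‖ := norm_inner_le_norm _ _
  rcases eq_or_lt_of_le (norm_nonneg (P x)) with h | h
  · rw [← h]; exact norm_nonneg x
  · nlinarith [h2, h3]

private lemma proj_norm_le_one (P : H →L[ℂ] H)
    (hP1 : IsIdempotentElem P) (hP2 : IsSelfAdjoint P) : ‖P‖ ≤ 1 := by
  refine ContinuousLinearMap.opNorm_le_bound P zero_le_one fun x => ?_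
  simpa using proj_norm_apply_le P hP1 hP2 x

private lemma proj_pythagoras (P : H →L[ℂ] H)
    (hP1 : IsIdempotentElem P) (hP2 : IsSelfAdjoint P) (x : H) :
    ‖P x‖ ^ 2 + ‖x - P x‖ ^ 2 = ‖x‖ ^ 2 := by
  have horth : ⟪P x, x - P x⟫ = 0 := by
    rw [sa_inner P hP2 x (x - P x), map_sub]
    have : P (P x) = P x := by rw [← ContinuousLinearMap.mul_apply, hP1]
    rw [this, sub_self, inner_zero_right]
  have := norm_add_sq (𝕜 := ℂ) (P x) (x - P x)
  simp only [horth, map_zero, mul_zero, add_zero] at this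
  rw [add_sub_cancel] at this
  linarith [this]

end Aux

/-- For orthogonal projections `P, Q` on a complex Hilbert space `H`,
`‖P − Q‖ = max {‖P (I − Q)‖, ‖Q (I − P)‖}`. -/
theorem norm_sub_orthogonalProjections
    {H : Type*} [NormedAddCommGroup H] [InnerProductSpace ℂ H] [CompleteSpace H]
    (P Q : H →L[ℂ] H)
    (hP1 : IsIdempotentElem P) (hP2 : IsSelfAdjoint P)
    (hQ1 : IsIdempotentElem Q) (hQ2 : IsSelfAdjoint Q) :
    ‖P - Q‖ = max ‖P ∘L (1 - Q)‖ ‖Q ∘L (1 - P)‖ := by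
  set M := max ‖P ∘L (1 - Q)‖ ‖Q ∘L (1 - P)‖ with hM
  have hM0 : 0 ≤ M := le_trans (norm_nonneg _) (le_max_left _ _)
  have hPP : ∀ x : H, P (P x) = P x := fun x => by rw [← ContinuousLinearMap.mul_apply, hP1]
  have hQQ : ∀ x : H, Q (Q x) = Q x := fun x => by rw [← ContinuousLinearMap.mul_apply, hQ1]
  -- norm of (1-P)∘Q equals norm of Q∘(1-P) by adjoints
  have hadj : ‖(1 - P) ∘L Q‖ = ‖Q ∘L (1 - P)‖ := by
    have hsa : IsSelfAdjoint ((1 : H →L[ℂ] H) - P) :=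
      ((IsSelfAdjoint.one (H →L[ℂ] H))).sub hP2
    have hA : ContinuousLinearMap.adjoint (Q ∘L (1 - P)) = (1 - P) ∘L Q := by
      rw [ContinuousLinearMap.adjoint_comp, hQ2.adjoint_eq, hsa.adjoint_eq]
    rw [← hA, LinearIsometryEquiv.norm_map]
  apply le_antisymm
  · -- upper bound
    refine ContinuousLinearMap.opNorm_le_bound _ hM0 fun x => ?_
    have hdecomp : (P - Q) x = P (x - Q x) - (Q x - P (Q x)) := by
      simp only [ContinuousLinearMap.sub_apply, map_sub]; abel
    have horth : ⟪P (x - Q x), Q x - P (Q x)⟫ = 0 := by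
      rw [sa_inner P hP2, map_sub, hPP, sub_self, inner_zero_right]
    have hpyth : ‖(P - Q) x‖ ^ 2 = ‖P (x - Q x)‖ ^ 2 + ‖Q x - P (Q x)‖ ^ 2 := by
      rw [hdecomp]
      have := norm_sub_sq (𝕜 := ℂ) (P (x - Q x)) (Q x - P (Q x))
      simp only [horth, map_zero, mul_zero] at this
      linarith [this]
    have h1 : ‖P (x - Q x)‖ ≤ ‖P ∘L (1 - Q)‖ * ‖x - Q x‖ := by
      have : P (x - Q x) = (P ∘L (1 - Q)) (x - Q x) := by
        simp [map_sub, hQQ]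
      rw [this]; exact ContinuousLinearMap.le_opNorm _ _
    have h2 : ‖Q x - P (Q x)‖ ≤ ‖Q ∘L (1 - P)‖ * ‖Q x‖ := by
      have heq : Q x - P (Q x) = ((1 - P) ∘L Q) (Q x) := by
        simp [hQQ]
      rw [heq, ← hadj]
      exact ContinuousLinearMap.le_opNorm _ _
    have hsum : ‖Q x‖ ^ 2 + ‖x - Q x‖ ^ 2 = ‖x‖ ^ 2 := proj_pythagoras Q hQ1 hQ2 x
    have hb1 : ‖P ∘L (1 - Q)‖ ≤ M := le_max_left _ _
    have hb2 : ‖Q ∘L (1 - P)‖ ≤ M := le_max_right _ _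
    have ha : ‖P (x - Q x)‖ ^ 2 ≤ (M * ‖x - Q x‖) ^ 2 :=
      pow_le_pow_left₀ (norm_nonneg _)
        (h1.trans (mul_le_mul_of_nonneg_right hb1 (norm_nonneg _))) 2
    have hb : ‖Q x - P (Q x)‖ ^ 2 ≤ (M * ‖Q x‖) ^ 2 :=
      pow_le_pow_left₀ (norm_nonneg _)
        (h2.trans (mul_le_mul_of_nonneg_right hb2 (norm_nonneg _))) 2
    have hcomb : (M * ‖x - Q x‖) ^ 2 + (M * ‖Q x‖) ^ 2 = (M * ‖x‖) ^ 2 := by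
      rw [mul_pow, mul_pow, mul_pow, ← mul_add]
      congr 1
      linarith [hsum]
    have hsq : ‖(P - Q) x‖ ^ 2 ≤ (M * ‖x‖) ^ 2 := by
      linarith [ha, hb, hcomb, hpyth]
    exact le_of_pow_le_pow_left₀ two_ne_zero (by positivity) hsq
  · -- lower bound
    have e1 : P ∘L (1 - Q) = P ∘L (P - Q) := by
      ext x; simp [map_sub, hPP]
    have e2 : Q ∘L (1 - P) = Q ∘L (Q - P) := by
      ext x; simp [map_sub, hQQ]
    have l1 : ‖P ∘L (1 - Q)‖ ≤ ‖P - Q‖ := by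
      rw [e1]
      calc ‖P ∘L (P - Q)‖ ≤ ‖P‖ * ‖P - Q‖ := ContinuousLinearMap.opNorm_comp_le _ _
      _ ≤ 1 * ‖P - Q‖ := by
          exact mul_le_mul_of_nonneg_right (proj_norm_le_one P hP1 hP2) (norm_nonneg _)
      _ = ‖P - Q‖ := one_mul _
    have l2 : ‖Q ∘L (1 - P)‖ ≤ ‖P - Q‖ := by
      rw [e2, norm_sub_rev P Q]
      calc ‖Q ∘L (Q - P)‖ ≤ ‖Q‖ * ‖Q - P‖ := ContinuousLinearMap.opNorm_comp_le _ _
      _ ≤ 1 * ‖Q - P‖ := by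
          exact mul_le_mul_of_nonneg_right (proj_norm_le_one Q hQ1 hQ2) (norm_nonneg _)
      _ = ‖Q - P‖ := one_mul _
    exact max_le l1 l2
end

section
/- Let H be a Hilbert space, {s_k} a frame for its closed span S with synthesis operator S : ℓ² → H, and {w_k} a Riesz basis for its closed span W with synthesis operator W : ℓ² → H. If W ∩ S^⊥ = {0}, then U := S*W : ℓ² → ℓ² is injective, and consequently for every n the n×n matrix Σ := ι_n* U* U ι_n is invertible, where ι_n : ℂⁿ → ℓ² is the canonical embedding. -/
open ContinuousLinearMap

noncomputable section

/-- The sequence space `ℓ²(ℕ)`. -/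
abbrev ell2 : Type := lp (fun _ : ℕ => ℂ) 2

/-- The canonical embedding `ι_n : ℂⁿ → ℓ²`, `(x_1, …, x_n) ↦ (x_1, …, x_n, 0, 0, …)`. -/
def iota (n : ℕ) : EuclideanSpace ℂ (Fin n) →L[ℂ] ell2 :=
  ∑ i : Fin n, (EuclideanSpace.proj i).smulRight (lp.single 2 (i : ℕ) (1 : ℂ))

lemma iota_injective (n : ℕ) : Function.Injective (iota n) := by
  rw [← ContinuousLinearMap.coe_coe, ← LinearMap.ker_eq_bot]
  rw [LinearMap.ker_eq_bot']
  intro x hx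
  have hx' : iota n x = 0 := hx
  ext i
  have h0 : ((inner ℂ (lp.single 2 (i : ℕ) (1 : ℂ)) (iota n x))) = 0 := by
    rw [hx', inner_zero_right]
  rw [iota] at h0
  simp only [ContinuousLinearMap.sum_apply, ContinuousLinearMap.smulRight_apply,
    inner_sum, inner_smul_right, lp.inner_single_left, RCLike.inner_apply, map_one,
    one_mul, lp.single_apply, Pi.single_apply, mul_ite, mul_one, mul_zero,
    Fin.val_inj, Finset.sum_ite_eq, Finset.mem_univ, if_true] at h0
  simpa [EuclideanSpace.proj] using h0

/-- Let `{s_k}` be a frame for its closed span `𝒮` with synthesis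
operator `S : ℓ² → H` (bounded, with closed range `𝒮`), and `{w_k}` a Riesz basis for
its closed span `𝒲` with synthesis operator `W : ℓ² → H` (bounded below). If
`𝒲 ∩ 𝒮^⊥ = {0}` then `U := S* W` is injective and, for every `n`, the finite section
`Σ = ι_n* U* U ι_n` is invertible (bijective). -/
theorem injective_U_and_finite_section_invertible
    {H : Type*} [NormedAddCommGroup H] [InnerProductSpace ℂ H] [CompleteSpace H]
    (S W : ell2 →L[ℂ] H)
    -- frame: synthesis operator has closed range (= the closed span `𝒮`)
    (hS : IsClosed (LinearMap.range (S : ell2 →ₗ[ℂ] H) : Set H))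
    -- Riesz basis: synthesis operator is bounded below (hence injective, closed range)
    (hW : ∃ C > 0, ∀ x : ell2, C * ‖x‖ ≤ ‖W x‖)
    -- `𝒲 ∩ 𝒮^⊥ = {0}`
    (hmeet : LinearMap.range (W : ell2 →ₗ[ℂ] H) ⊓ (LinearMap.range (S : ell2 →ₗ[ℂ] H))ᗮ = ⊥) :
    Function.Injective ((ContinuousLinearMap.adjoint S) ∘L W) ∧
    ∀ n : ℕ, Function.Bijective
      ((ContinuousLinearMap.adjoint (iota n)) ∘L
        (ContinuousLinearMap.adjoint ((ContinuousLinearMap.adjoint S) ∘L W)) ∘L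
        ((ContinuousLinearMap.adjoint S) ∘L W) ∘L (iota n)) := by
  obtain ⟨C, hC, hWb⟩ := hW
  have hWinj : Function.Injective W := by
    rw [← ContinuousLinearMap.coe_coe, ← LinearMap.ker_eq_bot, LinearMap.ker_eq_bot']
    intro x hx
    have : C * ‖x‖ ≤ 0 := by simpa [show W x = 0 from hx] using hWb x
    have hn : ‖x‖ = 0 := by nlinarith [norm_nonneg x]
    exact norm_eq_zero.mp hn
  set U := (ContinuousLinearMap.adjoint S) ∘L W with hU
  have hUinj : Function.Injective U := by
    rw [← ContinuousLinearMap.coe_coe, ← LinearMap.ker_eq_bot, LinearMap.ker_eq_bot']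
    intro x hx
    have hx' : (ContinuousLinearMap.adjoint S) (W x) = 0 := hx
    have hmem : W x ∈ LinearMap.range (W : ell2 →ₗ[ℂ] H) ⊓ (LinearMap.range (S : ell2 →ₗ[ℂ] H))ᗮ := by
      refine ⟨⟨x, rfl⟩, ?_⟩
      intro u hu
      obtain ⟨y, rfl⟩ := hu
      have : (inner ℂ y ((ContinuousLinearMap.adjoint S) (W x))) = (inner ℂ (S y) (W x)) :=
        ContinuousLinearMap.adjoint_inner_right S y (W x)
      rw [hx', inner_zero_right] at this
      exact this.symm
    rw [hmeet] at hmem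
    have h0 : W x = 0 := (Submodule.mem_bot ℂ).mp hmem
    exact hWinj (by simpa using h0)
  refine ⟨hUinj, fun n => ?_⟩
  set T := (ContinuousLinearMap.adjoint (iota n)) ∘L
        (ContinuousLinearMap.adjoint U) ∘L U ∘L (iota n) with hT
  have hTinj : Function.Injective T := by
    rw [← ContinuousLinearMap.coe_coe, ← LinearMap.ker_eq_bot, LinearMap.ker_eq_bot']
    intro x hx
    have hx' : T x = 0 := hx
    have h1 : (inner ℂ (T x) x) = (inner ℂ (U (iota n x)) (U (iota n x))) := by
      rw [hT]
      simp only [ContinuousLinearMap.comp_apply]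
      rw [ContinuousLinearMap.adjoint_inner_left, ContinuousLinearMap.adjoint_inner_left]
    rw [hx', inner_zero_left] at h1
    have : U (iota n x) = 0 := inner_self_eq_zero.mp h1.symm
    exact iota_injective n (by simpa using hUinj (by simpa using this))
  exact ⟨hTinj, LinearMap.injective_iff_surjective.mp hTinj⟩


end
end

section
/- Suppose S : ℓ² → H is the synthesis operator of a frame with lower bound A (i.e., ‖S*s‖² ≥ A‖s‖² for all s in the closed span S of the frame), W : ℓ² → H is the synthesis operator of a Riesz basis with bounds C ≤ ‖Wx‖²/‖x‖² ≤ D, and the reconstruction space W satisfies W ⊆ S. Then the finite section Σ = ι_n* W* S S* W ι_n satisfies ‖Σ‖ ≤ BD and ‖Σ⁻¹‖ ≤ 1/(AC), where B is the upper frame bound of S; in particular the condition number κ(Σ) ≤ BD/(AC) uniformly in n. -/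
open ContinuousLinearMap

noncomputable section

lemma iota_inner (n : ℕ) (x y : EuclideanSpace ℂ (Fin n)) :
    @inner ℂ _ _ (iota n x) (iota n y) = @inner ℂ _ _ x y := by
  simp only [iota, ContinuousLinearMap.sum_apply, smulRight_apply]
  rw [sum_inner, PiLp.inner_apply]
  refine Finset.sum_congr rfl fun i _ => ?_
  rw [inner_sum]
  rw [Finset.sum_eq_single i]
  · simp [inner_smul_left, inner_smul_right, lp.inner_single_left, lp.single_apply_self,
      RCLike.inner_apply, mul_comm]
  · intro j _ hj
    rw [inner_smul_left, inner_smul_right, lp.inner_single_left,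
      lp.single_apply_ne _ _ _ (by simpa [Fin.val_injective.ne_iff] using hj.symm : ((i:ℕ)) ≠ (j:ℕ))]
    simp
  · simp

lemma iota_norm (n : ℕ) (x : EuclideanSpace ℂ (Fin n)) : ‖iota n x‖ = ‖x‖ := by
  have := iota_inner n x x
  rw [inner_self_eq_norm_sq_to_K, inner_self_eq_norm_sq_to_K] at this
  have h2 : (‖iota n x‖:ℝ)^2 = ‖x‖^2 := by exact_mod_cast this
  nlinarith [norm_nonneg (iota n x), norm_nonneg x]


open RCLike
open scoped InnerProductSpace
set_option maxHeartbeats 1000000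

/-- If `S` is the synthesis operator of a frame with bounds
`A, B` on its closed span `𝒮`, `W` the synthesis operator of a Riesz basis with bounds
`C, D`, and `𝒲 ⊆ 𝒮`, then the finite section `Σ = ι_n* W* S S* W ι_n` satisfies
`‖Σ‖ ≤ B D` and `‖Σ⁻¹‖ ≤ 1/(A C)`; in particular `κ(Σ) = ‖Σ‖ ‖Σ⁻¹‖ ≤ B D/(A C)`,
uniformly in `n`. -/
theorem finite_section_condition_number_bound
    {H : Type*} [NormedAddCommGroup H] [InnerProductSpace ℂ H] [CompleteSpace H]
    (S W : ell2 →L[ℂ] H) (A B C D : ℝ)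
    (hA : 0 < A) (hB : 0 < B) (hC : 0 < C) (hD : 0 < D)
    -- frame bounds on the closed span `𝒮` of the frame
    (hframe : ∀ s ∈ (LinearMap.range (S : ell2 →ₗ[ℂ] H)).topologicalClosure,
      A * ‖s‖ ^ 2 ≤ ‖(ContinuousLinearMap.adjoint S) s‖ ^ 2 ∧
      ‖(ContinuousLinearMap.adjoint S) s‖ ^ 2 ≤ B * ‖s‖ ^ 2)
    -- Riesz basis bounds for `W`
    (hriesz : ∀ x : ell2, C * ‖x‖ ^ 2 ≤ ‖W x‖ ^ 2 ∧ ‖W x‖ ^ 2 ≤ D * ‖x‖ ^ 2)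
    -- subspace condition `𝒲 ⊆ 𝒮`
    (hsub : LinearMap.range (W : ell2 →ₗ[ℂ] H) ≤ (LinearMap.range (S : ell2 →ₗ[ℂ] H)).topologicalClosure)
    (n : ℕ) :
    ‖(ContinuousLinearMap.adjoint (iota n)) ∘L (ContinuousLinearMap.adjoint W) ∘L
        S ∘L (ContinuousLinearMap.adjoint S) ∘L W ∘L (iota n)‖ ≤ B * D ∧
    ∃ Sinv : EuclideanSpace ℂ (Fin n) →L[ℂ] EuclideanSpace ℂ (Fin n),
      ((ContinuousLinearMap.adjoint (iota n)) ∘L (ContinuousLinearMap.adjoint W) ∘L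
          S ∘L (ContinuousLinearMap.adjoint S) ∘L W ∘L (iota n)) ∘L Sinv =
        ContinuousLinearMap.id ℂ (EuclideanSpace ℂ (Fin n)) ∧
      Sinv ∘L ((ContinuousLinearMap.adjoint (iota n)) ∘L (ContinuousLinearMap.adjoint W) ∘L
          S ∘L (ContinuousLinearMap.adjoint S) ∘L W ∘L (iota n)) =
        ContinuousLinearMap.id ℂ (EuclideanSpace ℂ (Fin n)) ∧
      ‖Sinv‖ ≤ 1 / (A * C) ∧
      ‖(ContinuousLinearMap.adjoint (iota n)) ∘L (ContinuousLinearMap.adjoint W) ∘L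
          S ∘L (ContinuousLinearMap.adjoint S) ∘L W ∘L (iota n)‖ * ‖Sinv‖ ≤
        B * D / (A * C) := by
  set T := (ContinuousLinearMap.adjoint (iota n)) ∘L (ContinuousLinearMap.adjoint W) ∘L
      S ∘L (ContinuousLinearMap.adjoint S) ∘L W ∘L (iota n) with hT
  -- membership
  have hmem : ∀ z : ell2, W z ∈ (LinearMap.range (S : ell2 →ₗ[ℂ] H)).topologicalClosure :=
    fun z => hsub ⟨z, rfl⟩
  have hmem2 : ∀ s : ell2, S s ∈ (LinearMap.range (S : ell2 →ₗ[ℂ] H)).topologicalClosure := by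
    intro s
    exact Submodule.le_topologicalClosure _ ⟨s, rfl⟩
  -- norm bounds for individual operators
  have hWnorm : ∀ x : ell2, ‖W x‖ ≤ Real.sqrt D * ‖x‖ := by
    intro x
    have := (hriesz x).2
    have h := Real.sqrt_le_sqrt this
    rwa [Real.sqrt_sq (norm_nonneg _), Real.sqrt_mul hD.le, Real.sqrt_sq (norm_nonneg _)] at h
  have hSadj : ∀ s ∈ (LinearMap.range (S : ell2 →ₗ[ℂ] H)).topologicalClosure,
      ‖(ContinuousLinearMap.adjoint S) s‖ ≤ Real.sqrt B * ‖s‖ := by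
    intro s hs
    have := (hframe s hs).2
    have h := Real.sqrt_le_sqrt this
    rwa [Real.sqrt_sq (norm_nonneg _), Real.sqrt_mul hB.le, Real.sqrt_sq (norm_nonneg _)] at h
  have hSS : ∀ s ∈ (LinearMap.range (S : ell2 →ₗ[ℂ] H)).topologicalClosure,
      ‖S ((ContinuousLinearMap.adjoint S) s)‖ ≤ B * ‖s‖ := by
    intro s hs
    set t := S ((ContinuousLinearMap.adjoint S) s) with ht
    have h0 : ⟪(ContinuousLinearMap.adjoint S) s, (ContinuousLinearMap.adjoint S) t⟫_ℂ
        = ⟪t, t⟫_ℂ := by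
      rw [adjoint_inner_right, ← ht]
    have h1 : (‖t‖:ℝ)^2 = re (⟪(ContinuousLinearMap.adjoint S) s,
        (ContinuousLinearMap.adjoint S) t⟫_ℂ) := by
      rw [h0, inner_self_eq_norm_sq (𝕜 := ℂ)]
    have h2 : re (⟪(ContinuousLinearMap.adjoint S) s, (ContinuousLinearMap.adjoint S) t⟫_ℂ)
        ≤ ‖(ContinuousLinearMap.adjoint S) s‖ * ‖(ContinuousLinearMap.adjoint S) t‖ := by
      calc re (⟪(ContinuousLinearMap.adjoint S) s, (ContinuousLinearMap.adjoint S) t⟫_ℂ)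
          ≤ ‖⟪(ContinuousLinearMap.adjoint S) s, (ContinuousLinearMap.adjoint S) t⟫_ℂ‖ :=
            RCLike.re_le_norm _
        _ ≤ _ := norm_inner_le_norm _ _
    have h3 : ‖(ContinuousLinearMap.adjoint S) s‖ ≤ Real.sqrt B * ‖s‖ := hSadj s hs
    have h4 : ‖(ContinuousLinearMap.adjoint S) t‖ ≤ Real.sqrt B * ‖t‖ := hSadj t (hmem2 _)
    have hsqrt : Real.sqrt B * Real.sqrt B = B := Real.mul_self_sqrt hB.le
    have h5 : (‖t‖:ℝ)^2 ≤ B * ‖s‖ * ‖t‖ := by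
      calc (‖t‖:ℝ)^2 ≤ ‖(ContinuousLinearMap.adjoint S) s‖ * ‖(ContinuousLinearMap.adjoint S) t‖ :=
            h1 ▸ h2
        _ ≤ (Real.sqrt B * ‖s‖) * (Real.sqrt B * ‖t‖) := by
            apply mul_le_mul h3 h4 (norm_nonneg _) (by positivity)
        _ = B * ‖s‖ * ‖t‖ := by rw [mul_mul_mul_comm, hsqrt, mul_assoc]
    rcases eq_or_lt_of_le (norm_nonneg t) with h | h
    · rw [← h]; positivity
    · have h6 : ‖t‖ * ‖t‖ ≤ (B * ‖s‖) * ‖t‖ := by rw [← pow_two]; linarith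
      exact le_of_mul_le_mul_right h6 h
  -- upper bound ‖T‖ ≤ B * D
  have hTnorm : ‖T‖ ≤ B * D := by
    apply opNorm_le_bound _ (by positivity)
    intro x
    have e1 : ‖T x‖ ≤ ‖(ContinuousLinearMap.adjoint W)
        (S ((ContinuousLinearMap.adjoint S) (W (iota n x))))‖ := by
      rw [hT]
      simp only [comp_apply]
      calc ‖(ContinuousLinearMap.adjoint (iota n)) _‖
          ≤ ‖ContinuousLinearMap.adjoint (iota n)‖ * ‖_‖ := le_opNorm _ _
        _ ≤ 1 * ‖_‖ := by
            apply mul_le_mul_of_nonneg_right _ (norm_nonneg _)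
            rw [LinearIsometryEquiv.norm_map ContinuousLinearMap.adjoint (iota n)]
            exact opNorm_le_bound _ zero_le_one (fun y => by rw [iota_norm, one_mul])
        _ = _ := one_mul _
    have e2 : ‖(ContinuousLinearMap.adjoint W)
        (S ((ContinuousLinearMap.adjoint S) (W (iota n x))))‖ ≤
        Real.sqrt D * ‖S ((ContinuousLinearMap.adjoint S) (W (iota n x)))‖ := by
      calc ‖(ContinuousLinearMap.adjoint W) _‖ ≤ ‖ContinuousLinearMap.adjoint W‖ * ‖_‖ :=
            le_opNorm _ _
        _ ≤ Real.sqrt D * ‖_‖ := by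
            apply mul_le_mul_of_nonneg_right _ (norm_nonneg _)
            rw [LinearIsometryEquiv.norm_map ContinuousLinearMap.adjoint W]
            exact opNorm_le_bound _ (Real.sqrt_nonneg _) hWnorm
    have e3 : ‖S ((ContinuousLinearMap.adjoint S) (W (iota n x)))‖ ≤ B * ‖W (iota n x)‖ :=
      hSS _ (hmem _)
    have e4 : ‖W (iota n x)‖ ≤ Real.sqrt D * ‖x‖ := by
      calc ‖W (iota n x)‖ ≤ Real.sqrt D * ‖iota n x‖ := hWnorm _
        _ = Real.sqrt D * ‖x‖ := by rw [iota_norm]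
    have hsqrt : Real.sqrt D * Real.sqrt D = D := Real.mul_self_sqrt hD.le
    calc ‖T x‖ ≤ Real.sqrt D * (B * (Real.sqrt D * ‖x‖)) := by
          refine e1.trans (e2.trans ?_)
          apply mul_le_mul_of_nonneg_left _ (Real.sqrt_nonneg _)
          exact e3.trans (mul_le_mul_of_nonneg_left e4 hB.le)
      _ = (Real.sqrt D * Real.sqrt D) * (B * ‖x‖) := by ring
      _ = B * D * ‖x‖ := by rw [hsqrt]; ring
  -- coercivity
  have hcoer : ∀ x : EuclideanSpace ℂ (Fin n), A * C * ‖x‖ ≤ ‖T x‖ := by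
    intro x
    have hquad : re (⟪T x, x⟫_ℂ) = ‖(ContinuousLinearMap.adjoint S) (W (iota n x))‖^2 := by
      rw [hT]
      simp only [comp_apply]
      rw [adjoint_inner_left, adjoint_inner_left, ← adjoint_inner_right S,
        inner_self_eq_norm_sq (𝕜 := ℂ)]
    have h1 : A * C * ‖x‖^2 ≤ re (⟪T x, x⟫_ℂ) := by
      rw [hquad]
      have g1 : A * ‖W (iota n x)‖^2 ≤ ‖(ContinuousLinearMap.adjoint S) (W (iota n x))‖^2 :=
        (hframe _ (hmem _)).1
      have g2 : C * ‖iota n x‖^2 ≤ ‖W (iota n x)‖^2 := (hriesz _).1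
      rw [iota_norm] at g2
      nlinarith
    have h2 : re (⟪T x, x⟫_ℂ) ≤ ‖T x‖ * ‖x‖ :=
      (RCLike.re_le_norm _).trans (norm_inner_le_norm _ _)
    rcases eq_or_lt_of_le (norm_nonneg x) with h | h
    · rw [← h]; simp
    · nlinarith
  -- injectivity and invertibility
  have hker : ∀ x : EuclideanSpace ℂ (Fin n), T x = 0 → x = 0 := by
    intro x hx
    have h1 := hcoer x
    rw [hx, norm_zero] at h1
    have h2 : ‖x‖ ≤ 0 := by nlinarith [norm_nonneg x, mul_pos hA hC]
    exact norm_le_zero_iff.mp h2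
  have hinj : Function.Injective T := by
    intro x y hxy
    have := hker (x - y) (by rw [map_sub, hxy, sub_self])
    exact sub_eq_zero.mp this
  have hbij : Function.Bijective (T : EuclideanSpace ℂ (Fin n) →ₗ[ℂ] EuclideanSpace ℂ (Fin n)) :=
    ⟨hinj, (LinearMap.injective_iff_surjective).mp hinj⟩
  let e : EuclideanSpace ℂ (Fin n) ≃ₗ[ℂ] EuclideanSpace ℂ (Fin n) := LinearEquiv.ofBijective _ hbij
  let ec : EuclideanSpace ℂ (Fin n) ≃L[ℂ] EuclideanSpace ℂ (Fin n) := e.toContinuousLinearEquiv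
  set Sinv : EuclideanSpace ℂ (Fin n) →L[ℂ] EuclideanSpace ℂ (Fin n) :=
    (ec.symm : EuclideanSpace ℂ (Fin n) →L[ℂ] EuclideanSpace ℂ (Fin n)) with hSinvdef
  have hSinvnorm : ‖Sinv‖ ≤ 1 / (A * C) := by
    apply opNorm_le_bound _ (by positivity)
    intro y
    have h1 := hcoer (ec.symm y)
    have h2 : T (ec.symm y) = y := ec.apply_symm_apply y
    rw [h2] at h1
    rw [div_mul_eq_mul_div, one_mul, le_div_iff₀ (by positivity), mul_comm]
    exact h1
  refine ⟨hTnorm, Sinv, ?_, ?_, hSinvnorm, ?_⟩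
  · refine ContinuousLinearMap.ext fun x => ?_
    show T (ec.symm x) = x
    exact ec.apply_symm_apply x
  · refine ContinuousLinearMap.ext fun x => ?_
    show ec.symm (T x) = x
    exact ec.symm_apply_apply x
  · calc ‖T‖ * ‖Sinv‖ ≤ (B * D) * (1 / (A * C)) :=
          mul_le_mul hTnorm hSinvnorm (norm_nonneg _) (by positivity)
      _ = B * D / (A * C) := by rw [mul_one_div]
end
end
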